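/- arXiv:2103.05316 — 2 statements merged into one kernel-verified Lean document; each statement's English description precedes it below -/
import Mathlib

section
/- Let Z be a multi-type branching process with type set 𝒯, offspring distribution p, and mean offspring matrix M, satisfying (⋆) and (P). Let a⋆ ∈ 𝒯 and I ⊂ 𝒯 \ {a⋆}, assume Z_0 = e_{a⋆}, and let λ : 𝒯 → ℕ satisfy λ(a⋆) = 1 and P(Z survives | Z_0 = e_a) ≤ P(Z survives | Z_0 = λ(a)·e_{a⋆}) for all a ∈ 𝒯. If Σ_{a ∉ I} M(a⋆, a)·λ(a) + Σ_{a ∈ I} Σ_{b ∈ 𝒯} M(a⋆, a)·M(a, b)·λ(b) < 1, then Z goes extinct almost surely. -/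
open scoped ENNReal

section MTBP

variable {T : Type*} [Fintype T] [DecidableEq T]

/-- Convolution (law of an independent sum) of two population distributions. -/
noncomputable def addPMF (μ ν : PMF (T → ℕ)) : PMF (T → ℕ) :=
  μ.bind fun x => ν.map fun y => x + y

/-- Law of the sum of `n` i.i.d. populations with common law `μ`. -/
noncomputable def iidSum (μ : PMF (T → ℕ)) : ℕ → PMF (T → ℕ)
  | 0 => PMF.pure 0
  | n + 1 => addPMF μ (iidSum μ n)

/-- One generation of the multi-type branching process with offspring
distribution `p`: each of the `η a` individuals of each type `a` is replaced,
independently, by a population sampled from `p a`. -/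
noncomputable def branchStep (p : T → PMF (T → ℕ)) (η : T → ℕ) : PMF (T → ℕ) :=
  (Finset.univ : Finset T).toList.foldr
    (fun a acc => addPMF (iidSum (p a) (η a)) acc) (PMF.pure 0)

/-- The law of generation `n` of the multi-type branching process with offspring
distribution `p` started from the deterministic population `η`. -/
noncomputable def gen (p : T → PMF (T → ℕ)) (η : T → ℕ) : ℕ → PMF (T → ℕ)
  | 0 => PMF.pure η
  | n + 1 => (gen p η n).bind (branchStep p)

/-- The extinction probability of the multi-type branching process started from `η`.
Since `0` is absorbing, the events `{Z_n = 0}` increase, and the probability of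
extinction equals `⨆ n, P(Z_n = 0)`. -/
noncomputable def extinctionProb (p : T → PMF (T → ℕ)) (η : T → ℕ) : ℝ≥0∞ :=
  ⨆ n : ℕ, gen p η n 0

/-- The survival probability `P(Z survives ∣ Z_0 = η)`. -/
noncomputable def survivalProb (p : T → PMF (T → ℕ)) (η : T → ℕ) : ℝ≥0∞ :=
  1 - extinctionProb p η

/-- `e_a`, the population consisting of a single individual of type `a`. -/
def single (a : T) : T → ℕ := fun b => if b = a then 1 else 0

end MTBP

section MeanMatrix

variable {T : Type*} [Fintype T] [DecidableEq T]

/-- The mean offspring matrix `M(a,b) = E[Z_1(b) ∣ Z_0 = e_a]`. -/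
noncomputable def meanMatrix (p : T → PMF (T → ℕ)) : Matrix T T ℝ≥0∞ :=
  Matrix.of fun a b => ∑' η : T → ℕ, p a η * (η b : ℝ≥0∞)

/-- Condition (⋆): some type has positive probability of producing a population with
more than one individual. -/
def CondStar (p : T → PMF (T → ℕ)) : Prop :=
  ∃ (a : T) (η : T → ℕ), p a η ≠ 0 ∧ 1 < ∑ b : T, η b

/-- Condition (P): some power of the mean offspring matrix has all entries positive. -/
def CondPos (p : T → PMF (T → ℕ)) : Prop :=
  ∃ n : ℕ, ∀ a b : T, 0 < ((meanMatrix p) ^ n) a b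

end MeanMatrix

/-!
Write `s η` for the survival probability from `η` and `q η = 1 - s η` for the extinction
probability. Disjoint subpopulations evolve independently, so `q (η + ξ) = q η * q ξ`; hence `s`
is subadditive and `s η ≤ ∑ a, η a * s (e a)`. Conditioning on the first generation gives
`s (e a) ≤ ∑ b, M a b * s (e b)`. The hypothesis on `λ` bounds `s (e a) ≤ λ a * s (e a⋆)`;
using it directly for `a ∉ I` and after one more generation for `a ∈ I` yields
`s (e a⋆) ≤ C * s (e a⋆)` with `C < 1`, so `s (e a⋆) = 0`.
-/

namespace ENNReal

lemma one_sub_mul_le_add_one_sub {a b : ℝ≥0∞} (ha : a ≤ 1) :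
    1 - a * b ≤ (1 - a) + (1 - b) :=
  calc 1 - a * b ≤ (1 - a) + (a - a * b) := tsub_le_tsub_add_tsub
    _ = (1 - a) + a * (1 - b) := by
      rw [ENNReal.mul_sub fun _ _ => ne_top_of_le_ne_top one_ne_top ha, mul_one]
    _ ≤ (1 - a) + (1 - b) := by
      gcongr
      exact mul_le_of_le_one_left' ha

lemma tsum_iSup_of_monotone {α : Type*} {f : ℕ → α → ℝ≥0∞} (hf : Monotone f) :
    ∑' a, ⨆ n, f n a = ⨆ n, ∑' a, f n a := by
  refine le_antisymm ?_ (iSup_le fun n => ENNReal.tsum_le_tsum fun a => le_iSup (f · a) n)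
  rw [ENNReal.tsum_eq_iSup_sum]
  refine iSup_le fun s => ?_
  rw [ENNReal.finsetSum_iSup_of_monotone fun a m n hmn => hf hmn a]
  exact iSup_mono fun n => ENNReal.sum_le_tsum s

lemma iSup_mul_iSup_of_monotone {f g : ℕ → ℝ≥0∞} (hf : Monotone f) (hg : Monotone g) :
    (⨆ n, f n) * ⨆ n, g n = ⨆ n, f n * g n := by
  refine le_antisymm ?_ (iSup_le fun n => mul_le_mul' (le_iSup f n) (le_iSup g n))
  rw [ENNReal.iSup_mul]
  refine iSup_le fun m => ?_
  rw [ENNReal.mul_iSup]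
  exact iSup_le fun n => le_iSup_of_le (max m n) (mul_le_mul' (hf le_sup_left) (hg le_sup_right))

lemma eq_zero_of_le_mul_of_lt_one {a c : ℝ≥0∞} (ha : a ≠ ∞) (hc : c < 1) (h : a ≤ c * a) :
    a = 0 := by
  by_contra ha0
  exact (h.trans_lt (by simpa using ENNReal.mul_lt_mul_left ha0 ha hc)).false

end ENNReal

section Convolution

variable {T : Type*}

lemma addPMF_eq_bind_bind (μ ν : PMF (T → ℕ)) :
    addPMF μ ν = μ.bind fun x => ν.bind fun y => PMF.pure (x + y) := rfl

lemma addPMF_assoc (μ ν ρ : PMF (T → ℕ)) :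
    addPMF (addPMF μ ν) ρ = addPMF μ (addPMF ν ρ) := by
  simp only [addPMF_eq_bind_bind, PMF.bind_bind, PMF.pure_bind, add_assoc]

lemma addPMF_comm (μ ν : PMF (T → ℕ)) : addPMF μ ν = addPMF ν μ := by
  rw [addPMF_eq_bind_bind, addPMF_eq_bind_bind, PMF.bind_comm]
  simp only [add_comm]

lemma pure_zero_addPMF (ν : PMF (T → ℕ)) : addPMF (PMF.pure 0) ν = ν := by
  simp [addPMF_eq_bind_bind]

lemma addPMF_pure_zero (μ : PMF (T → ℕ)) : addPMF μ (PMF.pure 0) = μ := by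
  simp [addPMF_eq_bind_bind]

lemma addPMF_apply_zero (μ ν : PMF (T → ℕ)) : addPMF μ ν 0 = μ 0 * ν 0 := by
  rw [addPMF_eq_bind_bind, PMF.bind_apply, tsum_eq_single 0]
  · simp
  · intro x hx
    simp [PMF.pure_apply, eq_comm (a := (0 : T → ℕ)), hx]

lemma bind_addPMF {K : (T → ℕ) → PMF (T → ℕ)} (hK : ∀ x y, K (x + y) = addPMF (K x) (K y))
    (μ ν : PMF (T → ℕ)) : (addPMF μ ν).bind K = addPMF (μ.bind K) (ν.bind K) := by
  simp only [addPMF_eq_bind_bind, PMF.bind_bind, PMF.pure_bind, hK]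
  congr! 2 with x
  exact PMF.bind_comm ..

/-- Convolution of laws of populations, written multiplicatively so that a generation step
becomes the product `∏ a, p a ^ η a`. -/
noncomputable abbrev convCommMonoid : CommMonoid (PMF (T → ℕ)) where
  mul := addPMF
  one := PMF.pure 0
  mul_assoc := addPMF_assoc
  one_mul := pure_zero_addPMF
  mul_one := addPMF_pure_zero
  mul_comm := addPMF_comm

attribute [local instance] convCommMonoid

lemma iidSum_eq_pow (μ : PMF (T → ℕ)) (n : ℕ) : iidSum μ n = μ ^ n := by
  induction n with
  | zero => rfl
  | succ n ih => rw [pow_succ', ← ih]; rfl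

variable [Fintype T]

lemma branchStep_eq_prod (p : T → PMF (T → ℕ)) (η : T → ℕ) :
    branchStep p η = ∏ a, p a ^ η a := by
  rw [branchStep, Finset.prod_eq_multiset_prod, ← Finset.coe_toList, Multiset.map_coe,
    Multiset.prod_coe]
  induction (Finset.univ : Finset T).toList with
  | nil => rfl
  | cons a l ih => rw [List.foldr_cons, ih, iidSum_eq_pow]; rfl

lemma branchStep_add (p : T → PMF (T → ℕ)) (η ξ : T → ℕ) :
    branchStep p (η + ξ) = addPMF (branchStep p η) (branchStep p ξ) := by
  simp only [branchStep_eq_prod, Pi.add_apply, pow_add, Finset.prod_mul_distrib]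
  rfl

lemma branchStep_zero (p : T → PMF (T → ℕ)) : branchStep p 0 = PMF.pure 0 := by
  simp only [branchStep_eq_prod, Pi.zero_apply, pow_zero, Finset.prod_const_one]
  rfl

lemma branchStep_single [DecidableEq T] (p : T → PMF (T → ℕ)) (a : T) :
    branchStep p (single a) = p a := by
  rw [branchStep_eq_prod, Finset.prod_eq_single a] <;> simp_all [single]

end Convolution

section Extinction

variable {T : Type*} [Fintype T] (p : T → PMF (T → ℕ))

lemma gen_succ_eq_bind (η : T → ℕ) (n : ℕ) :
    gen p η (n + 1) = (branchStep p η).bind fun ξ => gen p ξ n := by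
  induction n generalizing η with
  | zero => exact (PMF.pure_bind ..).trans (PMF.bind_pure _).symm
  | succ n ih => rw [gen, ih, PMF.bind_bind]; rfl

lemma gen_add (η ξ : T → ℕ) (n : ℕ) :
    gen p (η + ξ) n = addPMF (gen p η n) (gen p ξ n) := by
  induction n with
  | zero => simp [gen, addPMF_eq_bind_bind]
  | succ n ih => rw [gen, ih, bind_addPMF (branchStep_add p)]; rfl

lemma monotone_gen_apply_zero (η : T → ℕ) : Monotone fun n => gen p η n 0 := by
  refine monotone_nat_of_le_succ fun n => ?_
  calc gen p η n 0 = gen p η n 0 * branchStep p 0 0 := by simp [branchStep_zero]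
    _ ≤ ∑' ξ, gen p η n ξ * branchStep p ξ 0 := ENNReal.le_tsum 0
    _ = gen p η (n + 1) 0 := (PMF.bind_apply ..).symm

lemma extinctionProb_le_one (η : T → ℕ) : extinctionProb p η ≤ 1 :=
  iSup_le fun _ => PMF.coe_le_one _ _

lemma survivalProb_zero : survivalProb p 0 = 0 :=
  tsub_eq_zero_of_le (le_iSup_of_le 0 (by simp [gen]))

lemma extinctionProb_add (η ξ : T → ℕ) :
    extinctionProb p (η + ξ) = extinctionProb p η * extinctionProb p ξ := by
  simp only [extinctionProb, gen_add, addPMF_apply_zero]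
  exact (ENNReal.iSup_mul_iSup_of_monotone (monotone_gen_apply_zero p η)
    (monotone_gen_apply_zero p ξ)).symm

lemma survivalProb_add_le (η ξ : T → ℕ) :
    survivalProb p (η + ξ) ≤ survivalProb p η + survivalProb p ξ := by
  rw [survivalProb, extinctionProb_add]
  exact ENNReal.one_sub_mul_le_add_one_sub (extinctionProb_le_one p η)

lemma survivalProb_nsmul_le (n : ℕ) (η : T → ℕ) :
    survivalProb p (n • η) ≤ n * survivalProb p η := by
  simpa using Finset.le_sum_of_subadditive (survivalProb p) (survivalProb_zero p).le
    (survivalProb_add_le p) (Finset.range n) fun _ => η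

variable [DecidableEq T]

lemma survivalProb_le_sum (η : T → ℕ) :
    survivalProb p η ≤ ∑ a, η a * survivalProb p (single a) := by
  have hη : ∑ a, η a • single a = η := by
    ext b
    simp [Finset.sum_apply, single]
  calc survivalProb p η = survivalProb p (∑ a, η a • single a) := by rw [hη]
    _ ≤ ∑ a, survivalProb p (η a • single a) :=
      Finset.le_sum_of_subadditive _ (survivalProb_zero p).le (survivalProb_add_le p) _ _
    _ ≤ ∑ a, η a * survivalProb p (single a) :=
      Finset.sum_le_sum fun a _ => survivalProb_nsmul_le p _ _

lemma survivalProb_ite_le (a : T) (n : ℕ) :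
    survivalProb p (fun b => if b = a then n else 0) ≤ n * survivalProb p (single a) := by
  convert survivalProb_nsmul_le p n (single a) using 2
  ext b
  simp [single]

lemma extinctionProb_single (a : T) :
    extinctionProb p (single a) = ∑' η, p a η * extinctionProb p η := by
  simp only [extinctionProb, ENNReal.mul_iSup]
  rw [ENNReal.tsum_iSup_of_monotone (f := fun n η => p a η * gen p η n 0) fun m n hmn η =>
      mul_le_mul' le_rfl (monotone_gen_apply_zero p η hmn),
    ← (monotone_gen_apply_zero p (single a)).iSup_nat_add 1]
  simp only [gen_succ_eq_bind, branchStep_single, PMF.bind_apply]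

lemma survivalProb_single_le_tsum (a : T) :
    survivalProb p (single a) ≤ ∑' η, p a η * survivalProb p η := by
  rw [survivalProb, extinctionProb_single, tsub_le_iff_right, ← ENNReal.tsum_add]
  apply le_of_eq
  calc 1 = ∑' η, p a η := (p a).tsum_coe.symm
    _ = ∑' η, (p a η * survivalProb p η + p a η * extinctionProb p η) := by
      simp only [← mul_add, survivalProb, tsub_add_cancel_of_le (extinctionProb_le_one p _),
        mul_one]

lemma survivalProb_single_le_sum_meanMatrix (a : T) :
    survivalProb p (single a) ≤ ∑ b, meanMatrix p a b * survivalProb p (single b) :=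
  calc survivalProb p (single a) ≤ ∑' η, p a η * survivalProb p η :=
        survivalProb_single_le_tsum p a
    _ ≤ ∑' η, p a η * ∑ b, η b * survivalProb p (single b) :=
        ENNReal.tsum_le_tsum fun η => mul_le_mul' le_rfl (survivalProb_le_sum p η)
    _ = ∑ b, meanMatrix p a b * survivalProb p (single b) := by
        simp only [Finset.mul_sum, ← mul_assoc]
        rw [Summable.tsum_finsetSum fun _ _ => ENNReal.summable]
        simp only [ENNReal.tsum_mul_right, meanMatrix, Matrix.of_apply]

lemma survivalProb_single_le_of_le {w : T → ℝ≥0∞} {s : ℝ≥0∞}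
    (h : ∀ b, survivalProb p (single b) ≤ w b * s) (a : T) :
    survivalProb p (single a) ≤ (∑ b, meanMatrix p a b * w b) * s := by
  refine (survivalProb_single_le_sum_meanMatrix p a).trans ?_
  rw [Finset.sum_mul]
  refine Finset.sum_le_sum fun b _ => ?_
  rw [mul_assoc]
  exact mul_le_mul' le_rfl (h b)

end Extinction

theorem extinction_of_mean_lt_one_general {T : Type*} [Fintype T] [DecidableEq T]
    (p : T → PMF (T → ℕ))
    (astar : T) (I : Finset T)
    (lam : T → ℕ)
    (hmono : ∀ a : T,
      survivalProb p (single a) ≤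
        survivalProb p (fun b => if b = astar then lam a else 0))
    (hmean : ∑ a ∈ Iᶜ, meanMatrix p astar a * (lam a : ℝ≥0∞) +
      ∑ a ∈ I, ∑ b : T, meanMatrix p astar a * meanMatrix p a b * (lam b : ℝ≥0∞) < 1) :
    extinctionProb p (single astar) = 1 := by
  suffices hs : survivalProb p (single astar) = 0 from
    le_antisymm (extinctionProb_le_one p _) (tsub_eq_zero_iff_le.mp hs)
  have hlam (a : T) : survivalProb p (single a) ≤ lam a * survivalProb p (single astar) :=
    (hmono a).trans (survivalProb_ite_le p astar (lam a))
  have hw (a : T) : survivalProb p (single a) ≤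
      (if a ∈ I then ∑ b, meanMatrix p a b * lam b else (lam a : ℝ≥0∞)) *
        survivalProb p (single astar) := by
    split_ifs
    exacts [survivalProb_single_le_of_le p hlam a, hlam a]
  refine ENNReal.eq_zero_of_le_mul_of_lt_one (ne_top_of_le_ne_top ENNReal.one_ne_top tsub_le_self)
    hmean ((survivalProb_single_le_of_le p hw astar).trans_eq ?_)
  rw [← Finset.sum_compl_add_sum I]
  congr 2
  all_goals refine Finset.sum_congr rfl fun a ha => ?_
  · simp [Finset.mem_compl.mp ha]
  · simp [ha, Finset.mul_sum, mul_assoc]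

/-- **Lemma 3.3(b)** (de Lima–Szabó–Valesin). Let `Z` be a multi-type branching process
satisfying (⋆) and (P), let `a⋆` be a type, `I ⊆ 𝒯 \ {a⋆}`, and let `λ : 𝒯 → ℕ` with
`λ(a⋆) = 1` satisfy `P(Z survives ∣ Z_0 = e_a) ≤ P(Z survives ∣ Z_0 = λ(a)·e_{a⋆})`
for all `a`.  If
`Σ_{a ∉ I} M(a⋆,a)·λ(a) + Σ_{a ∈ I} Σ_b M(a⋆,a)·M(a,b)·λ(b) < 1`,
then `Z` started from `e_{a⋆}` goes extinct almost surely. -/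
theorem extinction_of_mean_lt_one {T : Type*} [Fintype T] [DecidableEq T]
    (p : T → PMF (T → ℕ)) (hstar : CondStar p) (hpos : CondPos p)
    (astar : T) (I : Finset T) (hI : astar ∉ I)
    (lam : T → ℕ) (hlam : lam astar = 1)
    (hmono : ∀ a : T,
      survivalProb p (single a) ≤
        survivalProb p (fun b => if b = astar then lam a else 0))
    (hmean : ∑ a ∈ Iᶜ, meanMatrix p astar a * (lam a : ℝ≥0∞) +
      ∑ a ∈ I, ∑ b : T, meanMatrix p astar a * meanMatrix p a b * (lam b : ℝ≥0∞) < 1) :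
    extinctionProb p (single astar) = 1 :=
  extinction_of_mean_lt_one_general p astar I lam hmono hmean
end

section
/- For any A ∈ 𝒜, M̄(A) = (1 − p^{k−h(A)}) · d^k · q^{|A|} · p^{h(A)} / (1 − pd). In particular, under the parametrization q = (1−pd)/d^k + s/d^{2k} with pd < 1 and s fixed: d^k·(M̄({o}) − 1) → s/(1−pd) as k → ∞, and for A ∈ 𝒜 with |A| = 2, d^k·M̄(A) → (1−pd)·p^{h(A)} as k → ∞. -/
open MeasureTheory ProbabilityTheory Filter

/-- Vertices of the tree `T_{d,k}`: finite sequences over `[d]`. The root is `[]`. -/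
abbrev Vert (d : ℕ) := List (Fin d)

/-- A percolation configuration: a Boolean (open/closed) for every pair `(v, s)`;
the pair `(v, s)` represents the oriented edge from `v` to `v ++ s`.  Only pairs
with `s.length = 1` (short edges) or `s.length = k` (long edges) are actual edges. -/
abbrev Config (d : ℕ) := (Vert d × List (Fin d)) → Bool

/-- One open oriented edge step from `v` to `w`. -/
def step (d k : ℕ) (ω : Config d) (v w : Vert d) : Prop :=
  ∃ s : List (Fin d), (s.length = 1 ∨ s.length = k) ∧ w = v ++ s ∧ ω (v, s) = true

/-- The cluster of a set `B` of vertices: all vertices reachable from `B`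
by an oriented path of open edges (with the convention `B ⊆ cluster`). -/
def cluster (d k : ℕ) (ω : Config d) (B : Set (Vert d)) : Set (Vert d) :=
  {w | ∃ v ∈ B, Relation.ReflTransGen (step d k ω) v w}

/-- `μ` is the law of Bernoulli bond percolation on `T_{d,k}` in which,
independently, every short edge is open with probability `p` and every
long edge is open with probability `q`. -/
def IsPercolation (d k : ℕ) (p q : ℝ) (μ : Measure (Config d)) : Prop :=
  IsProbabilityMeasure μ ∧
  iIndepFun (fun e (ω : Config d) => ω e) μ ∧
  (∀ v : Vert d, ∀ s : List (Fin d), s.length = 1 →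
      (μ {ω | ω (v, s) = true}).toReal = p) ∧
  (∀ v : Vert d, ∀ s : List (Fin d), s.length = k →
      (μ {ω | ω (v, s) = true}).toReal = q)

/-- One open *short* edge step from `v` to `w`. -/
def shortStep (d : ℕ) (ω : Config d) (v w : Vert d) : Prop :=
  ∃ s : List (Fin d), s.length = 1 ∧ w = v ++ s ∧ ω (v, s) = true

/-- `C_s^B`: the short cluster of `B`, i.e. all vertices reachable from `B` by oriented
open paths using only short edges (with `B ⊆ C_s^B`). -/
def shortCluster (d : ℕ) (ω : Config d) (B : Set (Vert d)) : Set (Vert d) :=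
  {w | ∃ v ∈ B, Relation.ReflTransGen (shortStep d ω) v w}

/-- `C_ℓ^B`: the vertices outside `C_s^B` which are endpoints of open long edges
starting in `C_s^B`. -/
def longCluster (d k : ℕ) (ω : Config d) (B : Set (Vert d)) : Set (Vert d) :=
  {w | w ∉ shortCluster d ω B ∧ ∃ v ∈ shortCluster d ω B,
    ∃ s : List (Fin d), s.length = k ∧ w = v ++ s ∧ ω (v, s) = true}

/-- `V^v`: the full subtree rooted at `v`. -/
def subtree {d : ℕ} (v : Vert d) : Set (Vert d) := {w | ∃ s : List (Fin d), w = v ++ s}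

/-- `V_Γ^v`: the subtree of height `k - 1` rooted at `v`. -/
def gammaSet (d k : ℕ) (v : Vert d) : Set (Vert d) :=
  {w | ∃ s : List (Fin d), s.length < k ∧ w = v ++ s}

/-- A set `B` of vertices is admissible if `B ⊆ V_Γ^u` for some (necessarily unique)
`u ∈ B`, called the base of `B`. -/
def Admissible (d k : ℕ) (B : Set (Vert d)) : Prop :=
  ∃ u ∈ B, B ⊆ gammaSet d k u

/-- The base `b(B)` of an admissible set `B`. -/
noncomputable def base (d k : ℕ) (B : Set (Vert d)) : Vert d :=
  haveI := Classical.dec (Admissible d k B)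
  if h : Admissible d k B then h.choose else []

/-- The relation on `C_ℓ^B`: `u` and `v` are related iff there is `w ∈ C_ℓ^B` with
`u, v ∈ V^w` (for admissible `B` this is an equivalence relation on `C_ℓ^B`). -/
def longRel (d k : ℕ) (ω : Config d) (B : Set (Vert d)) (u v : Vert d) : Prop :=
  u ∈ longCluster d k ω B ∧ v ∈ longCluster d k ω B ∧
    ∃ w ∈ longCluster d k ω B, u ∈ subtree w ∧ v ∈ subtree w

/-- `ℬ^B`: the collection of equivalence classes of `C_ℓ^B` under `longRel`. -/
def longClasses (d k : ℕ) (ω : Config d) (B : Set (Vert d)) : Set (Set (Vert d)) :=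
  {S | ∃ u ∈ longCluster d k ω B, S = {v | longRel d k ω B u v}}

/-- The type `t(B)` of an admissible set `B`: the set of words that must be concatenated
with the base of `B` to produce `B`. -/
noncomputable def typeOf (d k : ℕ) (B : Set (Vert d)) : Set (Vert d) :=
  {v | v ∈ gammaSet d k ([] : Vert d) ∧ base d k B ++ v ∈ B}

/-- `𝒜`: the set of types, i.e. admissible sets based at the root. -/
def typeSpace (d k : ℕ) : Set (Set (Vert d)) :=
  {A | ([] : Vert d) ∈ A ∧ A ⊆ gammaSet d k ([] : Vert d)}

open scoped ENNReal
open MeasureTheory in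
/-- The mean offspring matrix of the exploration branching process:
`M(A, A') = E[#{B' ∈ ℬ^B : t(B') = A'}]` for `B` an admissible set of type `A`
(we take the canonical representative `B = A`, which is admissible with base the root). -/
noncomputable def meanOffspring (d k : ℕ) (μ : Measure (Config d))
    (A A' : Set (Vert d)) : ℝ≥0∞ :=
  ∫⁻ ω, ({B' | B' ∈ longClasses d k ω A ∧ typeOf d k B' = A'}.encard : ℕ∞) ∂μ

open MeasureTheory in
/-- `M̄(A)`: the expected number of vertices `v ∈ C_ℓ^{{o}}` such that
`C_ℓ^{{o}} ∩ V^v ⊇ {v·u : u ∈ A}`. -/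
noncomputable def meanUpper (d k : ℕ) (μ : Measure (Config d))
    (A : Set (Vert d)) : ℝ≥0∞ :=
  ∫⁻ ω, ({v | v ∈ longCluster d k ω {([] : Vert d)} ∧
      ∀ u ∈ A, v ++ u ∈ longCluster d k ω {([] : Vert d)}}.encard : ℕ∞) ∂μ

/-- The height `h(A) = sup_{v ∈ A} h(v)` of a set of vertices. -/
noncomputable def heightSet {d : ℕ} (A : Set (Vert d)) : ℕ :=
  sSup (List.length '' A)

/-- The parametrization `q = (1-pd)/d^k + s/d^{2k}` of Section 3.3. -/
noncomputable def qparam (d : ℕ) (p s : ℝ) (k : ℕ) : ℝ :=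
  (1 - p * d) / (d : ℝ) ^ k + s / (d : ℝ) ^ (2 * k)

/-!
A vertex `w` lies in `C_ℓ^{o}` iff `|w| ≥ k`, the short edges on the path from `o` to the
ancestor of `w` at height `|w| - k` are open, not all short edges on the path to `w` are open,
and the long edge into `w` is open. Hence, for `A ∈ 𝒜` of height `h`, `v` and all `v·u`
(`u ∈ A`) lie in `C_ℓ^{o}` iff the first `|v| - k + h` short edges on the path to `v` are open,
the `|A|` long edges into the `v·u` are open, and not all of the remaining `k - h` short edges
of that path are open. These edge sets are disjoint, so by independence the event has
probability `p^(|v|-k+h) q^|A| (1 - p^(k-h))`; summing over the `d^n` vertices of height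
`n ≥ k` gives a geometric series of ratio `pd`. The limits follow from `d^k q = 1 - pd + s/d^k`.
-/

open Topology

section Bernoulli

variable {E : Type*} {ν : Measure (E → Bool)}

lemma measurableSet_forall_mem_eq_true (S : Finset E) :
    MeasurableSet {ω : E → Bool | ∀ e ∈ S, ω e = true} := by
  simp only [Set.ofPred_forall]
  exact Finset.measurableSet_biInter S fun e _ =>
    measurableSet_eq_fun (measurable_pi_apply e) measurable_const

lemma measure_forall_mem_eq_true (h : iIndepFun (fun e (ω : E → Bool) => ω e) ν) (S : Finset E) :
    ν {ω | ∀ e ∈ S, ω e = true} = ∏ e ∈ S, ν {ω | ω e = true} := by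
  simpa [Set.ofPred_forall, Set.preimage] using h.measure_inter_preimage_eq_mul S
    (sets := fun _ => ({true} : Set Bool)) (fun _ _ => measurableSet_singleton true)

lemma measure_forall_mem_sdiff_eq [IsFiniteMeasure ν]
    (h : iIndepFun (fun e (ω : E → Bool) => ω e) ν) {F G : Finset E} (hFG : Disjoint F G) :
    ν ({ω | ∀ e ∈ F, ω e = true} \ {ω | ∀ e ∈ G, ω e = true}) =
      (∏ e ∈ F, ν {ω | ω e = true}) * (1 - ∏ e ∈ G, ν {ω | ω e = true}) := by
  classical
  have hinter : {ω : E → Bool | ∀ e ∈ F, ω e = true} ∩ {ω | ∀ e ∈ G, ω e = true} =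
      {ω | ∀ e ∈ F ∪ G, ω e = true} := by
    ext ω; simp only [Finset.forall_mem_union, Set.mem_inter_iff, Set.mem_ofPred_eq]
  rw [← Set.sdiff_self_inter, measure_sdiff Set.inter_subset_left
    ((measurableSet_forall_mem_eq_true F).inter
      (measurableSet_forall_mem_eq_true G)).nullMeasurableSet (measure_ne_top _ _), hinter,
    measure_forall_mem_eq_true h, measure_forall_mem_eq_true h, Finset.prod_union hFG,
    ENNReal.mul_sub fun _ _ => ENNReal.prod_ne_top fun _ _ => measure_ne_top _ _, mul_one]

end Bernoulli

section Tree

variable {d k : ℕ}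

def edgeInto (n : ℕ) (w : Vert d) : Vert d × List (Fin d) :=
  (w.take (w.length - n), w.drop (w.length - n))

lemma edgeInto_append (v s : Vert d) : edgeInto s.length (v ++ s) = (v, s) := by
  simp [edgeInto]

lemma edgeInto_injective (n : ℕ) : Function.Injective (edgeInto (d := d) n) := by
  intro w w' h
  rw [← List.take_append_drop (w.length - n) w, ← List.take_append_drop (w'.length - n) w']
  exact congrArg₂ (· ++ ·) (congrArg Prod.fst h) (congrArg Prod.snd h)

lemma length_edgeInto_snd {n : ℕ} {w : Vert d} (h : n ≤ w.length) :
    (edgeInto n w).2.length = n := by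
  simp only [edgeInto, List.length_drop]
  omega

def ShortOpen (ω : Config d) (v : Vert d) (j : ℕ) : Prop :=
  ∀ i ∈ Finset.Ioc 0 j, ω (edgeInto 1 (v.take i)) = true

lemma shortOpen_congr {ω : Config d} {v v' : Vert d} {j : ℕ} (h : v.take j = v'.take j) :
    ShortOpen ω v j ↔ ShortOpen ω v' j := by
  refine forall₂_congr fun i hi => ?_
  have hij : i ≤ j := (Finset.mem_Ioc.mp hi).2
  rw [← min_eq_left hij, ← List.take_take, h, List.take_take]

lemma shortOpen_append {ω : Config d} {v u : Vert d} {j : ℕ} (hj : j ≤ v.length) :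
    ShortOpen ω (v ++ u) j ↔ ShortOpen ω v j :=
  shortOpen_congr (List.take_append_of_le_length hj)

lemma ShortOpen.mono {ω : Config d} {v : Vert d} {i j : ℕ} (h : ShortOpen ω v j) (hij : i ≤ j) :
    ShortOpen ω v i :=
  fun l hl => h l (Finset.Ioc_subset_Ioc_right hij hl)

lemma shortOpen_iff_of_le {ω : Config d} {v : Vert d} {i j : ℕ} (hij : i ≤ j) :
    ShortOpen ω v j ↔
      ShortOpen ω v i ∧ ∀ l ∈ Finset.Ioc i j, ω (edgeInto 1 (v.take l)) = true := by
  rw [ShortOpen, ShortOpen, ← Finset.Ioc_union_Ioc_eq_Ioc (Nat.zero_le i) hij]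
  exact Finset.forall_mem_union

lemma shortOpen_succ {ω : Config d} {v : Vert d} {j : ℕ} :
    ShortOpen ω v (j + 1) ↔ ShortOpen ω v j ∧ ω (edgeInto 1 (v.take (j + 1))) = true := by
  rw [shortOpen_iff_of_le j.le_succ, Nat.Ioc_succ_singleton]
  simp only [Finset.mem_singleton, forall_eq]

lemma mem_shortCluster_iff {ω : Config d} {v : Vert d} :
    v ∈ shortCluster d ω {[]} ↔ ShortOpen ω v v.length := by
  constructor
  · rintro ⟨r, rfl, hpath⟩
    induction hpath with
    | refl => simp [ShortOpen]
    | @tail w _ _ hstep ih =>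
      obtain ⟨s, hs, rfl, hopen⟩ := hstep
      have hlen : (w ++ s).length = w.length + 1 := by simp [hs]
      rw [hlen, shortOpen_succ, shortOpen_append le_rfl, ← hlen, List.take_length, ← hs,
        edgeInto_append]
      exact ⟨ih, hopen⟩
  · intro h
    refine ⟨[], rfl, ?_⟩
    induction v using List.reverseRecOn with
    | nil => exact .refl
    | append_singleton w a ih =>
      have hlen : (w ++ [a]).length = w.length + 1 := List.length_append
      have hedge : edgeInto 1 (w ++ [a]) = (w, [a]) := edgeInto_append w [a]
      rw [hlen, shortOpen_succ, shortOpen_append le_rfl, ← hlen, List.take_length, hedge] at h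
      exact .tail (ih h.1) ⟨[a], rfl, rfl, h.2⟩

lemma mem_longCluster_iff {ω : Config d} {w : Vert d} :
    w ∈ longCluster d k ω {[]} ↔ k ≤ w.length ∧ ShortOpen ω w (w.length - k) ∧
      ¬ ShortOpen ω w w.length ∧ ω (edgeInto k w) = true := by
  simp only [longCluster, Set.mem_ofPred_eq, mem_shortCluster_iff]
  constructor
  · rintro ⟨hw, v, hv, s, rfl, rfl, hopen⟩
    rw [show (v ++ s).length - s.length = v.length by simp, shortOpen_append le_rfl,
      edgeInto_append]
    exact ⟨by simp, hv, hw, hopen⟩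
  · rintro ⟨hk, hv, hw, hopen⟩
    refine ⟨hw, _, ?_, _, length_edgeInto_snd hk, (List.take_append_drop _ w).symm, hopen⟩
    rwa [List.length_take, min_eq_left (Nat.sub_le _ _),
      shortOpen_congr (v' := w) (by rw [List.take_take, min_self])]

variable {A : Set (Vert d)}

lemma finite_of_mem_typeSpace (hA : A ∈ typeSpace d k) : A.Finite :=
  (List.finite_length_lt (Fin d) k).subset fun u hu => by
    obtain ⟨s, hs, rfl⟩ := hA.2 hu
    simpa using hs

lemma length_le_heightSet (hA : A.Finite) {u : Vert d} (hu : u ∈ A) :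
    u.length ≤ heightSet A :=
  le_csSup (hA.image _).bddAbove ⟨u, hu, rfl⟩

lemma exists_length_eq_heightSet (hA : A.Finite) (hne : A.Nonempty) :
    ∃ u ∈ A, u.length = heightSet A :=
  Nat.sSup_mem (hne.image _) (hA.image _).bddAbove

lemma heightSet_lt (hA : A ∈ typeSpace d k) : heightSet A < k := by
  obtain ⟨u, hu, hlen⟩ := exists_length_eq_heightSet (finite_of_mem_typeSpace hA) ⟨_, hA.1⟩
  obtain ⟨s, hs, rfl⟩ := hA.2 hu
  simpa [← hlen] using hs

lemma mem_typeSpace_of_finite (h0 : [] ∈ A) (hA : A.Finite) (hk : heightSet A < k) :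
    A ∈ typeSpace d k :=
  ⟨h0, fun u hu => ⟨u, (length_le_heightSet hA hu).trans_lt hk, rfl⟩⟩

lemma heightSet_singleton_nil : heightSet ({[]} : Set (Vert d)) = 0 := by
  rw [heightSet, Set.image_singleton, List.length_nil, csSup_singleton]

def upperEvent (k : ℕ) (A : Set (Vert d)) (v : Vert d) : Set (Config d) :=
  {ω | v ∈ longCluster d k ω {[]} ∧ ∀ u ∈ A, v ++ u ∈ longCluster d k ω {[]}}

lemma upperEvent_eq_empty {v : Vert d} (hv : v.length < k) : upperEvent k A v = ∅ :=
  Set.eq_empty_of_forall_notMem fun _ hω => hv.not_ge (mem_longCluster_iff.mp hω.1).1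

lemma mem_upperEvent_iff (hA : A ∈ typeSpace d k) {v : Vert d} (hv : k ≤ v.length)
    {ω : Config d} :
    ω ∈ upperEvent k A v ↔ ShortOpen ω v (v.length - k + heightSet A) ∧
      (∀ u ∈ A, ω (edgeInto k (v ++ u)) = true) ∧
      ¬ ∀ i ∈ Finset.Ioc (v.length - k + heightSet A) v.length,
          ω (edgeInto 1 (v.take i)) = true := by
  have hfin := finite_of_mem_typeSpace hA
  have hhk := heightSet_lt hA
  have hlen : ∀ u ∈ A, (v ++ u).length - k = v.length - k + u.length := fun u _ => by
    rw [List.length_append]; omega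
  have hle : ∀ u ∈ A, v.length - k + u.length ≤ v.length := fun u hu => by
    have := length_le_heightSet hfin hu; omega
  have hsplit : ShortOpen ω v v.length ↔ ShortOpen ω v (v.length - k + heightSet A) ∧
      ∀ i ∈ Finset.Ioc (v.length - k + heightSet A) v.length,
        ω (edgeInto 1 (v.take i)) = true :=
    shortOpen_iff_of_le (by omega)
  simp only [upperEvent, Set.mem_ofPred_eq, mem_longCluster_iff]
  constructor
  · rintro ⟨⟨-, -, hnv, -⟩, hu⟩
    -- a highest `u₀ ∈ A` forces the first `|v| - k + h(A)` short edges to be open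
    obtain ⟨u₀, hu₀, hlen₀⟩ := exists_length_eq_heightSet hfin ⟨_, hA.1⟩
    have hS := (hu u₀ hu₀).2.1
    rw [hlen u₀ hu₀, shortOpen_append (hle u₀ hu₀), hlen₀] at hS
    exact ⟨hS, fun u hu' => (hu u hu').2.2.2, fun hG => hnv (hsplit.mpr ⟨hS, hG⟩)⟩
  · rintro ⟨hS, hL, hG⟩
    have hnv : ¬ ShortOpen ω v v.length := fun h => hG (hsplit.mp h).2
    refine ⟨⟨hv, hS.mono (Nat.le_add_right _ _), hnv, by simpa using hL [] hA.1⟩,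
      fun u hu => ⟨by rw [List.length_append]; omega, ?_, ?_, hL u hu⟩⟩
    · rw [hlen u hu, shortOpen_append (hle u hu)]
      exact hS.mono (by have := length_le_heightSet hfin hu; omega)
    · exact fun h => hnv ((shortOpen_append le_rfl).mp (h.mono (by simp)))

def shortEdges (v : Vert d) (I : Finset ℕ) : Finset (Vert d × List (Fin d)) :=
  I.image fun i => edgeInto 1 (v.take i)

def longEdges (k : ℕ) (v : Vert d) (B : Finset (Vert d)) : Finset (Vert d × List (Fin d)) :=
  B.image fun u => edgeInto k (v ++ u)

lemma forall_mem_shortEdges {ω : Config d} {v : Vert d} {I : Finset ℕ} :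
    (∀ e ∈ shortEdges v I, ω e = true) ↔ ∀ i ∈ I, ω (edgeInto 1 (v.take i)) = true :=
  Finset.forall_mem_image

lemma forall_mem_longEdges {ω : Config d} {v : Vert d} {B : Finset (Vert d)} :
    (∀ e ∈ longEdges k v B, ω e = true) ↔ ∀ u ∈ B, ω (edgeInto k (v ++ u)) = true :=
  Finset.forall_mem_image

lemma upperEvent_eq_sdiff (hA : A ∈ typeSpace d k) {B : Finset (Vert d)} (hB : ↑B = A)
    {v : Vert d} (hv : k ≤ v.length) :
    upperEvent k A v =
      {ω | ∀ e ∈ shortEdges v (Finset.Ioc 0 (v.length - k + heightSet A)) ∪ longEdges k v B,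
          ω e = true} \
        {ω | ∀ e ∈ shortEdges v (Finset.Ioc (v.length - k + heightSet A) v.length),
          ω e = true} := by
  ext ω
  rw [mem_upperEvent_iff hA hv, ← hB]
  simp only [Set.mem_sdiff, Set.mem_ofPred_eq, Finset.forall_mem_union, forall_mem_shortEdges,
    forall_mem_longEdges, Finset.mem_coe, ShortOpen, and_assoc]

lemma injOn_edgeInto_take (v : Vert d) :
    Set.InjOn (fun i => edgeInto 1 (v.take i)) (Set.Iic v.length) := by
  intro i hi j hj hij
  have := congrArg List.length (edgeInto_injective 1 hij)
  simp only [List.length_take] at this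
  simp only [Set.mem_Iic] at hi hj
  omega

lemma disjoint_shortEdges {v : Vert d} {I J : Finset ℕ} (hI : ↑I ⊆ Set.Iic v.length)
    (hJ : ↑J ⊆ Set.Iic v.length) (hIJ : Disjoint I J) :
    Disjoint (shortEdges v I) (shortEdges v J) := by
  rw [Finset.disjoint_left]
  rintro _ he he'
  obtain ⟨i, hi, rfl⟩ := Finset.mem_image.mp he
  obtain ⟨j, hj, hji⟩ := Finset.mem_image.mp he'
  rw [← injOn_edgeInto_take v (hI hi) (hJ hj) hji.symm] at hj
  exact Finset.disjoint_left.mp hIJ hi hj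

-- For `k = 1` the long and the short edges are the same pairs `(v, s)` of a configuration.
lemma disjoint_longEdges_shortEdges (hk : k ≠ 1) {v : Vert d} (hv : k ≤ v.length)
    {B : Finset (Vert d)} {I : Finset ℕ} (hI : ↑I ⊆ Set.Ioc 0 v.length) :
    Disjoint (longEdges k v B) (shortEdges v I) := by
  rw [Finset.disjoint_left]
  rintro _ he he'
  obtain ⟨u, -, rfl⟩ := Finset.mem_image.mp he
  obtain ⟨i, hi, hiu⟩ := Finset.mem_image.mp he'
  obtain ⟨hi0, hin⟩ := hI hi
  have hlen : (edgeInto 1 (v.take i)).2.length = (edgeInto k (v ++ u)).2.length := by rw [hiu]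
  rw [length_edgeInto_snd (by simp; omega), length_edgeInto_snd (by simp; omega)] at hlen
  omega

variable {p q : ℝ} {ν : Measure (Config d)}

lemma IsPercolation.measure_short (h : IsPercolation d k p q ν) {e : Vert d × List (Fin d)}
    (he : e.2.length = 1) : ν {ω | ω e = true} = ENNReal.ofReal p := by
  have := h.1
  rw [← h.2.2.1 e.1 e.2 he, ENNReal.ofReal_toReal (measure_ne_top _ _)]

lemma IsPercolation.measure_long (h : IsPercolation d k p q ν) {e : Vert d × List (Fin d)}
    (he : e.2.length = k) : ν {ω | ω e = true} = ENNReal.ofReal q := by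
  have := h.1
  rw [← h.2.2.2 e.1 e.2 he, ENNReal.ofReal_toReal (measure_ne_top _ _)]

lemma prod_measure_shortEdges (h : IsPercolation d k p q ν) {v : Vert d} {I : Finset ℕ}
    (hI : ↑I ⊆ Set.Ioc 0 v.length) :
    ∏ e ∈ shortEdges v I, ν {ω | ω e = true} = ENNReal.ofReal p ^ I.card := by
  rw [shortEdges, Finset.prod_image ((injOn_edgeInto_take v).mono
      (hI.trans Set.Ioc_subset_Iic_self)),
    Finset.prod_congr rfl fun i hi => h.measure_short (length_edgeInto_snd ?_), Finset.prod_const]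
  obtain ⟨hi0, hin⟩ := hI hi
  simp only [List.length_take]
  omega

lemma prod_measure_longEdges (h : IsPercolation d k p q ν) {v : Vert d} (hv : k ≤ v.length)
    (B : Finset (Vert d)) :
    ∏ e ∈ longEdges k v B, ν {ω | ω e = true} = ENNReal.ofReal q ^ B.card := by
  rw [longEdges, Finset.prod_image fun _ _ _ _ huv => List.append_cancel_left
      (edgeInto_injective k huv),
    Finset.prod_congr rfl fun u _ => h.measure_long (length_edgeInto_snd ?_), Finset.prod_const]
  simp only [List.length_append]
  omega

lemma measure_upperEvent (hk : k ≠ 1) (h : IsPercolation d k p q ν) (hA : A ∈ typeSpace d k)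
    {v : Vert d} (hv : k ≤ v.length) :
    ν (upperEvent k A v) = ENNReal.ofReal p ^ (v.length - k + heightSet A) *
      ENNReal.ofReal q ^ A.ncard * (1 - ENNReal.ofReal p ^ (k - heightSet A)) := by
  have := h.1
  have hfin := finite_of_mem_typeSpace hA
  have hhk := heightSet_lt hA
  set m := v.length - k + heightSet A
  have hI₁ : ↑(Finset.Ioc 0 m) ⊆ Set.Ioc 0 v.length := by
    intro i; simp only [Finset.coe_Ioc, Set.mem_Ioc]; omega
  have hI₂ : ↑(Finset.Ioc m v.length) ⊆ Set.Ioc 0 v.length := by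
    intro i; simp only [Finset.coe_Ioc, Set.mem_Ioc]; omega
  have hdisj₁ :
      Disjoint (shortEdges v (Finset.Ioc 0 m)) (shortEdges v (Finset.Ioc m v.length)) :=
    disjoint_shortEdges (hI₁.trans Set.Ioc_subset_Iic_self) (hI₂.trans Set.Ioc_subset_Iic_self)
      (Finset.Ioc_disjoint_Ioc_of_le le_rfl)
  have hdisj₂ := disjoint_longEdges_shortEdges (B := hfin.toFinset) hk hv hI₂
  rw [upperEvent_eq_sdiff hA hfin.coe_toFinset hv,
    measure_forall_mem_sdiff_eq h.2.1 (Finset.disjoint_union_left.mpr ⟨hdisj₁, hdisj₂⟩),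
    Finset.prod_union (disjoint_longEdges_shortEdges hk hv hI₁).symm,
    prod_measure_shortEdges h hI₁, prod_measure_longEdges h hv, prod_measure_shortEdges h hI₂,
    Nat.card_Ioc, Nat.card_Ioc, Set.ncard_eq_toFinset_card A hfin]
  congr 3
  omega

lemma measurableSet_upperEvent (hA : A ∈ typeSpace d k) (v : Vert d) :
    MeasurableSet (upperEvent k A v) := by
  rcases lt_or_ge v.length k with hv | hv
  · rw [upperEvent_eq_empty hv]
    exact .empty
  · rw [upperEvent_eq_sdiff hA (finite_of_mem_typeSpace hA).coe_toFinset hv]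
    exact (measurableSet_forall_mem_eq_true _).diff (measurableSet_forall_mem_eq_true _)

lemma meanUpper_eq_tsum (hA : A ∈ typeSpace d k) (ν : Measure (Config d)) :
    meanUpper d k ν A = ∑' v, ν (upperEvent k A v) := by
  have hcount : ∀ ω : Config d,
      (({v | v ∈ longCluster d k ω {[]} ∧ ∀ u ∈ A, v ++ u ∈ longCluster d k ω {[]}}.encard :
        ℕ∞) : ℝ≥0∞) = ∑' v, (upperEvent k A v).indicator (fun _ => 1) ω := fun ω => by
    rw [← ENNReal.tsum_set_one, tsum_subtype _ fun _ => (1 : ℝ≥0∞)]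
    rfl
  rw [meanUpper, lintegral_congr hcount, lintegral_tsum fun v =>
    (measurable_const.indicator (measurableSet_upperEvent hA v)).aemeasurable]
  exact tsum_congr fun v => lintegral_indicator_one (measurableSet_upperEvent hA v)

lemma tsum_comp_length (g : ℕ → ℝ≥0∞) :
    ∑' v : Vert d, g v.length = ∑' n, (d : ℝ≥0∞) ^ n * g n := by
  rw [← ENNReal.tsum_fiberwise _ List.length]
  refine tsum_congr fun n => ?_
  have hcard : (List.length ⁻¹' {n} : Set (Vert d)).encard = (d ^ n : ℕ) := by
    rw [Set.encard]
    change ENat.card (List.Vector (Fin d) n) = _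
    rw [ENat.card_eq_coe_fintype_card, card_vector, Fintype.card_fin]
  rw [tsum_congr fun v : List.length ⁻¹' {n} => congrArg g v.2, ENNReal.tsum_set_const, hcard]
  simp

lemma meanUpper_eq (hk : k ≠ 1) (h : IsPercolation d k p q ν) (hA : A ∈ typeSpace d k) :
    meanUpper d k ν A = (1 - ENNReal.ofReal p ^ (k - heightSet A)) * (d : ℝ≥0∞) ^ k *
      ENNReal.ofReal q ^ A.ncard * ENNReal.ofReal p ^ heightSet A *
      (1 - d * ENNReal.ofReal p)⁻¹ := by
  set c := (1 - ENNReal.ofReal p ^ (k - heightSet A)) * ENNReal.ofReal q ^ A.ncard *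
    ENNReal.ofReal p ^ heightSet A
  set g : ℕ → ℝ≥0∞ := fun n => if k ≤ n then c * ENNReal.ofReal p ^ (n - k) else 0
  have hterm : ∀ v : Vert d, ν (upperEvent k A v) = g v.length := fun v => by
    rcases lt_or_ge v.length k with hv | hv
    · simp [g, upperEvent_eq_empty hv, hv.not_ge]
    · simp only [g, if_pos hv, measure_upperEvent hk h hA hv, c, pow_add]
      ring
  have hsupp : Function.support (fun n => (d : ℝ≥0∞) ^ n * g n) ⊆ Set.range (· + k) :=
    fun n hn => ⟨n - k, Nat.sub_add_cancel (not_lt.mp fun hnk => hn (by simp [g, hnk.not_ge]))⟩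
  rw [meanUpper_eq_tsum hA, tsum_congr hterm, tsum_comp_length g,
    ← (add_left_injective k).tsum_eq hsupp]
  simp only [g, le_add_iff_nonneg_left, zero_le, if_true, Nat.add_sub_cancel]
  rw [tsum_congr fun m => show (d : ℝ≥0∞) ^ (m + k) * (c * ENNReal.ofReal p ^ m) =
      c * d ^ k * (d * ENNReal.ofReal p) ^ m by ring,
    ENNReal.tsum_mul_left, ENNReal.tsum_geometric]
  ring

lemma meanUpper_toReal (hk : k ≠ 1) (hp0 : 0 ≤ p) (hp1 : p ≤ 1) (hq0 : 0 ≤ q) (hpd : p * d < 1)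
    (h : IsPercolation d k p q ν) (hA : A ∈ typeSpace d k) :
    (meanUpper d k ν A).toReal = (1 - p ^ (k - heightSet A)) *
      ((d : ℝ) ^ k * q ^ A.ncard * p ^ heightSet A) / (1 - p * d) := by
  have hpow : 1 - ENNReal.ofReal p ^ (k - heightSet A) =
      ENNReal.ofReal (1 - p ^ (k - heightSet A)) := by
    rw [ENNReal.ofReal_sub _ (by positivity), ENNReal.ofReal_one, ENNReal.ofReal_pow hp0]
  have hgeom : 1 - (d : ℝ≥0∞) * ENNReal.ofReal p = ENNReal.ofReal (1 - p * d) := by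
    rw [ENNReal.ofReal_sub _ (by positivity), ENNReal.ofReal_one, ENNReal.ofReal_mul hp0,
      ENNReal.ofReal_natCast, mul_comm]
  rw [meanUpper_eq hk h hA, hpow, hgeom]
  simp only [ENNReal.toReal_mul, ENNReal.toReal_inv, ENNReal.toReal_pow, ENNReal.toReal_natCast,
    ENNReal.toReal_ofReal hp0, ENNReal.toReal_ofReal hq0,
    ENNReal.toReal_ofReal (sub_nonneg.mpr (pow_le_one₀ hp0 hp1)),
    ENNReal.toReal_ofReal (sub_nonneg.mpr hpd.le)]
  ring

section qparam

variable {s : ℝ}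

lemma pow_mul_qparam (hd : d ≠ 0) (k : ℕ) :
    (d : ℝ) ^ k * qparam d p s k = (1 - p * d) + s / (d : ℝ) ^ k := by
  have : (d : ℝ) ^ k ≠ 0 := pow_ne_zero _ (Nat.cast_ne_zero.mpr hd)
  rw [qparam, two_mul, pow_add]
  field_simp

lemma tendsto_pow_mul_qparam (hd : 1 < d) :
    Tendsto (fun k => (d : ℝ) ^ k * qparam d p s k) atTop (𝓝 (1 - p * d)) := by
  simp only [pow_mul_qparam (d := d) (by omega)]
  simpa using tendsto_const_nhds.add (tendsto_const_nhds.div_atTop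
    (tendsto_pow_atTop_atTop_of_one_lt (Nat.one_lt_cast.mpr hd : (1 : ℝ) < d)))

lemma eventually_qparam_mem_Icc (hd : 1 < d) (hpd : p * d < 1) :
    ∀ᶠ k in atTop, qparam d p s k ∈ Set.Icc 0 1 := by
  have hdk := tendsto_pow_atTop_atTop_of_one_lt (Nat.one_lt_cast.mpr hd : (1 : ℝ) < d)
  have hq : Tendsto (qparam d p s) atTop (𝓝 0) := by
    refine ((tendsto_pow_mul_qparam (p := p) (s := s) hd).div_atTop hdk).congr fun k => ?_
    have : (d : ℝ) ^ k ≠ 0 := by positivity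
    field_simp
  filter_upwards [(tendsto_pow_mul_qparam hd).eventually (lt_mem_nhds (sub_pos.mpr hpd)),
    hq.eventually (gt_mem_nhds one_pos)] with k hpos hle
  exact ⟨(pos_of_mul_pos_right hpos (by positivity)).le, hle.le⟩

lemma tendsto_singleton_formula (hd : 1 < d) (hp0 : 0 ≤ p) (hpd : p * d < 1) :
    Tendsto (fun k => (d : ℝ) ^ k *
        ((1 - p ^ k) * ((d : ℝ) ^ k * qparam d p s k) / (1 - p * d) - 1))
      atTop (𝓝 (s / (1 - p * d))) := by
  have hp1 : p < 1 := by nlinarith [(Nat.one_lt_cast.mpr hd : (1 : ℝ) < d)]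
  have hlim := (tendsto_pow_atTop_nhds_zero_of_lt_one (by positivity) hpd).neg.add
    (((tendsto_const_nhds (x := (1 : ℝ))).sub
      (tendsto_pow_atTop_nhds_zero_of_lt_one hp0 hp1)).mul_const (s / (1 - p * d)))
  simp only [neg_zero, sub_zero, one_mul, zero_add] at hlim
  refine hlim.congr fun k => ?_
  have : (d : ℝ) ^ k ≠ 0 := by positivity
  have : 1 - p * d ≠ 0 := by linarith
  rw [pow_mul_qparam (by omega), mul_pow]
  field_simp
  ring

lemma tendsto_pair_formula (hd : 1 < d) (hp0 : 0 ≤ p) (hpd : p * d < 1) (h : ℕ) :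
    Tendsto (fun k => (d : ℝ) ^ k *
        ((1 - p ^ (k - h)) * ((d : ℝ) ^ k * qparam d p s k ^ 2 * p ^ h) / (1 - p * d)))
      atTop (𝓝 ((1 - p * d) * p ^ h)) := by
  have hp1 : p < 1 := by nlinarith [(Nat.one_lt_cast.mpr hd : (1 : ℝ) < d)]
  have hlim := ((tendsto_const_nhds (x := (1 : ℝ))).sub
    ((tendsto_pow_atTop_nhds_zero_of_lt_one hp0 hp1).comp (tendsto_sub_atTop_nat h))).mul
    (((tendsto_pow_mul_qparam (p := p) (s := s) hd).pow 2).mul_const (p ^ h / (1 - p * d)))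
  have : 1 - p * d ≠ 0 := by linarith
  rw [show (1 - 0) * ((1 - p * d) ^ 2 * (p ^ h / (1 - p * d))) = (1 - p * d) * p ^ h by
    rw [sub_zero, one_mul]; field_simp] at hlim
  refine hlim.congr fun k => ?_
  simp only [Function.comp_apply]
  ring

end qparam

end Tree

/-- **Lemma 3.9** (de Lima–Szabó–Valesin), formula for `M̄` and its consequences.
(i) For any `A ∈ 𝒜`, `M̄(A) = (1 - p^{k-h(A)})·d^k·q^{|A|}·p^{h(A)}/(1-pd)`.
(ii) Under the parametrization `q = (1-pd)/d^k + s/d^{2k}`,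
`d^k·(M̄({o}) - 1) → s/(1-pd)` as `k → ∞`, and
(iii) for `A` with `o ∈ A` and `|A| = 2`, `d^k·M̄(A) → (1-pd)·p^{h(A)}`. -/
theorem meanUpper_formula_and_limits (d : ℕ) (hd : 2 ≤ d)
    (p : ℝ) (hp0 : 0 ≤ p) (hpd : p * d < 1) (s : ℝ)
    (μ : ℕ → Measure (Config d))
    (hμ : ∀ k, 2 ≤ k → qparam d p s k ∈ Set.Icc (0 : ℝ) 1 →
      IsPercolation d k p (qparam d p s k) (μ k)) :
    (∀ k, 2 ≤ k → ∀ q' : ℝ, q' ∈ Set.Icc (0 : ℝ) 1 →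
      ∀ ν : Measure (Config d), IsPercolation d k p q' ν →
      ∀ A ∈ typeSpace d k,
        (meanUpper d k ν A).toReal =
          (1 - p ^ (k - heightSet A)) *
            ((d : ℝ) ^ k * q' ^ A.ncard * p ^ heightSet A) / (1 - p * d)) ∧
    Tendsto
      (fun k : ℕ => (d : ℝ) ^ k * ((meanUpper d k (μ k) {([] : Vert d)}).toReal - 1))
      atTop (nhds (s / (1 - p * d))) ∧
    (∀ A : Set (Vert d), ([] : Vert d) ∈ A → A.encard = 2 →
      Tendsto (fun k : ℕ => (d : ℝ) ^ k * (meanUpper d k (μ k) A).toReal)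
        atTop (nhds ((1 - p * d) * p ^ heightSet A))) := by
  have hd1 : 1 < d := by omega
  have hp1 : p ≤ 1 := by
    nlinarith [mul_le_mul_of_nonneg_left (by exact_mod_cast hd : (2 : ℝ) ≤ d) hp0]
  have formula : ∀ k, 2 ≤ k → ∀ q' : ℝ, q' ∈ Set.Icc (0 : ℝ) 1 →
      ∀ ν : Measure (Config d), IsPercolation d k p q' ν → ∀ A ∈ typeSpace d k, _ :=
    fun k hk q' hq' ν hν A hA => meanUpper_toReal (by omega) hp0 hp1 hq'.1 hpd hν hA
  have hformula : ∀ᶠ k in atTop, ∀ A ∈ typeSpace d k, (meanUpper d k (μ k) A).toReal =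
      (1 - p ^ (k - heightSet A)) *
        ((d : ℝ) ^ k * qparam d p s k ^ A.ncard * p ^ heightSet A) / (1 - p * d) := by
    filter_upwards [eventually_qparam_mem_Icc hd1 hpd, eventually_ge_atTop 2] with k hq hk
    exact formula k hk _ hq _ (hμ k hk hq)
  refine ⟨formula, ?_, fun A hA0 hA2 => ?_⟩
  · refine (tendsto_singleton_formula hd1 hp0 hpd).congr' ?_
    filter_upwards [hformula, eventually_ge_atTop 1] with k hk hk1
    rw [hk _ (mem_typeSpace_of_finite (Set.mem_singleton _) (Set.finite_singleton _)
      (by rw [heightSet_singleton_nil]; omega)), heightSet_singleton_nil, Set.ncard_singleton]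
    simp only [Nat.sub_zero, pow_one, pow_zero, mul_one]
  · refine (tendsto_pair_formula (s := s) hd1 hp0 hpd (heightSet A)).congr' ?_
    filter_upwards [hformula, eventually_gt_atTop (heightSet A)] with k hk hkh
    rw [hk _ (mem_typeSpace_of_finite hA0 (Set.finite_of_encard_eq_coe hA2) hkh),
      Set.ncard_def, hA2]
    rfl
end
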